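/- arXiv:2012.01676 — 5 statements merged into one kernel-verified Lean document; each statement's English description precedes it below -/
import Mathlib

section
/- Let n be a nonempty finite type and let U ∈ Matrix.unitaryGroup (n × n) ℂ be a unitary matrix. Suppose Φ is a nonzero element of the ℂ-linear span (inside the space of linear maps Matrix n n ℂ →ₗ[ℂ] Matrix n n ℂ) of the set of CPTP maps, and suppose T_U[Φ] = λ • Φ for some λ ∈ ℂ, where T_U is the transfer operator of U (with A = B = n). Then |λ| ≤ 1. -/
open scoped Matrix ComplexOrder

/-- Partial trace over the second factor `B`. -/
noncomputable def ptraceB (A B : Type*) [Fintype A] [Fintype B] :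
    Matrix (A × B) (A × B) ℂ →ₗ[ℂ] Matrix A A ℂ where
  toFun M := Matrix.of fun a a' => ∑ b : B, M (a, b) (a', b)
  map_add' M N := by
    ext a a'
    simp [Finset.sum_add_distrib]
  map_smul' c M := by
    ext a a'
    simp [Finset.mul_sum]

/-- The ancilla-attaching map `ρ ↦ ρ ⊗ |b0⟩⟨b0|`. -/
noncomputable def ancilla (A B : Type*) [Fintype A] [Fintype B] [DecidableEq B] (b0 : B) :
    Matrix A A ℂ →ₗ[ℂ] Matrix (A × B) (A × B) ℂ where
  toFun ρ := Matrix.of fun p p' => if p.2 = b0 ∧ p'.2 = b0 then ρ p.1 p'.1 else 0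
  map_add' ρ σ := by
    ext p p'
    by_cases h : p.2 = b0 ∧ p'.2 = b0 <;> simp [h]
  map_smul' c ρ := by
    ext p p'
    by_cases h : p.2 = b0 ∧ p'.2 = b0 <;> simp [h]

/-- The amplification `I_A ⊗ Φ` of a linear map `Φ` on `B`-indexed matrices. -/
noncomputable def amp (A : Type*) {B : Type*} [Fintype A] [Fintype B]
    (Φ : Matrix B B ℂ →ₗ[ℂ] Matrix B B ℂ) :
    Matrix (A × B) (A × B) ℂ →ₗ[ℂ] Matrix (A × B) (A × B) ℂ where
  toFun M := Matrix.of fun p p' => Φ (Matrix.of fun c c' => M (p.1, c) (p'.1, c')) p.2 p'.2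
  map_add' M N := by
    ext p p'
    simp only [Matrix.of_apply, Matrix.add_apply]
    have h : (Matrix.of fun c c' => M (p.1, c) (p'.1, c') + N (p.1, c) (p'.1, c'))
        = (Matrix.of fun c c' => M (p.1, c) (p'.1, c'))
          + (Matrix.of fun c c' => N (p.1, c) (p'.1, c')) := by
      ext c c'; simp
    rw [h, map_add, Matrix.add_apply]
  map_smul' r M := by
    ext p p'
    simp only [Matrix.of_apply, Matrix.smul_apply, smul_eq_mul, RingHom.id_apply]
    have h : (Matrix.of fun c c' => r * M (p.1, c) (p'.1, c'))
        = r • (Matrix.of fun c c' => M (p.1, c) (p'.1, c')) := by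
      ext c c'; simp
    rw [h, map_smul, Matrix.smul_apply, smul_eq_mul]

/-- The linear map `M ↦ P * M * Q`. -/
noncomputable def sandwich {n : Type*} [Fintype n] (P Q : Matrix n n ℂ) :
    Matrix n n ℂ →ₗ[ℂ] Matrix n n ℂ where
  toFun M := P * M * Q
  map_add' M N := by simp [Matrix.mul_add, Matrix.add_mul]
  map_smul' c M := by simp [Matrix.mul_smul, Matrix.smul_mul]

/-- The transfer operator `T_U[Φ](ρ) = Tr_B(Uᴴ * ((I_A ⊗ Φ)(U * E(ρ) * Uᴴ)) * U)`. -/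
noncomputable def transferOp {A B : Type*} [Fintype A] [Fintype B] [DecidableEq B]
    (b0 : B) (U : Matrix (A × B) (A × B) ℂ)
    (Φ : Matrix B B ℂ →ₗ[ℂ] Matrix B B ℂ) : Matrix A A ℂ →ₗ[ℂ] Matrix A A ℂ :=
  (ptraceB A B) ∘ₗ (sandwich Uᴴ U) ∘ₗ (amp A Φ) ∘ₗ (sandwich U Uᴴ) ∘ₗ (ancilla A B b0)

/-- A linear map on matrices is trace-preserving if it preserves the trace. -/
def IsTracePreserving {n : Type*} [Fintype n]
    (Φ : Matrix n n ℂ →ₗ[ℂ] Matrix n n ℂ) : Prop :=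
  ∀ X : Matrix n n ℂ, (Φ X).trace = X.trace

/-- A linear map on matrices is completely positive if all of its amplifications
map positive semidefinite matrices to positive semidefinite matrices. -/
def IsCompletelyPositive {n : Type*} [Fintype n]
    (Φ : Matrix n n ℂ →ₗ[ℂ] Matrix n n ℂ) : Prop :=
  ∀ (m : Type) (_ : Fintype m), ∀ M : Matrix (m × n) (m × n) ℂ,
    M.PosSemidef → (amp m Φ M).PosSemidef

/-- A CPTP map (quantum channel). -/
def IsCPTP {n : Type*} [Fintype n] (Φ : Matrix n n ℂ →ₗ[ℂ] Matrix n n ℂ) : Prop :=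
  IsTracePreserving Φ ∧ IsCompletelyPositive Φ

/-!
The transfer operator `T_U` is linear in `Φ` and maps CPTP maps to CPTP maps: `T_U[Φ]` is the
composition of `I ⊗ Φ` with the Kraus maps `E`, `U · Uᴴ`, `Uᴴ · U` and `Tr_B`, each of which
preserves the trace. CPTP maps are uniformly bounded, since `Ψ(|a⟩⟨a'|)` is a block of the Choi
matrix of `Ψ`, a positive semidefinite matrix of trace `card n`. Writing `Φ = ∑ cᵢ Ψᵢ` with `Ψᵢ`
CPTP, the iterates `λᵏ Φ = T_Uᵏ[Φ] = ∑ cᵢ T_Uᵏ[Ψᵢ]` therefore stay bounded, so `|λ| ≤ 1`.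
-/

open scoped Kronecker

theorem norm_le_one_of_apply_eq_smul_of_mem_span {𝕜 V : Type*} [NormedField 𝕜]
    [AddCommGroup V] [Module 𝕜 V] {T : Module.End 𝕜 V} {S : Set V} (hT : Set.MapsTo T S S)
    (ℓ : V →ₗ[𝕜] 𝕜) (hℓ : ∃ C, ∀ s ∈ S, ‖ℓ s‖ ≤ C) {v : V} (hv : v ∈ Submodule.span 𝕜 S)
    (hℓv : ℓ v ≠ 0) {lam : 𝕜} (h : T v = lam • v) : ‖lam‖ ≤ 1 := by
  have orbit_bdd : ∀ w ∈ Submodule.span 𝕜 S, ∃ C, ∀ k : ℕ, ‖ℓ ((T ^ k) w)‖ ≤ C := by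
    intro w hw
    induction hw using Submodule.span_induction with
    | mem s hs =>
      obtain ⟨C, hC⟩ := hℓ
      exact ⟨C, fun k => hC _ (by rw [Module.End.coe_pow]; exact hT.iterate k hs)⟩
    | zero => exact ⟨0, fun k => by simp⟩
    | add x y _ _ hx hy =>
      obtain ⟨Cx, hCx⟩ := hx
      obtain ⟨Cy, hCy⟩ := hy
      exact ⟨Cx + Cy, fun k => by
        rw [map_add, map_add]
        exact (norm_add_le _ _).trans (add_le_add (hCx k) (hCy k))⟩
    | smul c x _ hx =>
      obtain ⟨C, hC⟩ := hx
      exact ⟨‖c‖ * C, fun k => by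
        rw [map_smul, map_smul, norm_smul]
        exact mul_le_mul_of_nonneg_left (hC k) (norm_nonneg c)⟩
  obtain ⟨C, hC⟩ := orbit_bdd v hv
  have hpow : ∀ k : ℕ, (T ^ k) v = lam ^ k • v := by
    intro k
    induction k with
    | zero => simp
    | succ k ih => rw [pow_succ', Module.End.mul_apply, ih, map_smul, h, smul_smul, pow_succ]
  by_contra! hlam
  obtain ⟨k, hk⟩ := pow_unbounded_of_one_lt (C / ‖ℓ v‖) hlam
  have hCk := hC k
  rw [hpow, map_smul, norm_smul, norm_pow] at hCk
  rw [div_lt_iff₀ (norm_pos_iff.2 hℓv)] at hk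
  linarith

namespace Matrix.PosSemidef

variable {n : Type*} {M : Matrix n n ℂ}

theorem norm_apply_sq_le [DecidableEq n] (hM : M.PosSemidef) (i j : n) :
    ‖M i j‖ ^ 2 ≤ (M i i).re * (M j j).re := by
  have hdet := (hM.submatrix ![i, j]).det_nonneg
  simp only [Matrix.det_fin_two, Matrix.submatrix_apply, Matrix.cons_val_zero,
    Matrix.cons_val_one] at hdet
  rw [← hM.1.apply j i, Complex.star_def, Complex.mul_conj',
    Complex.eq_re_of_ofReal_le hM.diag_nonneg,
    Complex.eq_re_of_ofReal_le (hM.diag_nonneg (i := j))] at hdet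
  exact_mod_cast sub_nonneg.1 (Complex.zero_le_real.1 (by exact_mod_cast hdet))

theorem re_apply_le_re_trace [Fintype n] (hM : M.PosSemidef) (i : n) :
    (M i i).re ≤ M.trace.re := by
  rw [Matrix.trace, Complex.re_sum]
  exact Finset.single_le_sum (f := fun j => (M j j).re)
    (fun j _ => (Complex.nonneg_iff.1 hM.diag_nonneg).1) (Finset.mem_univ i)

theorem norm_apply_le_re_trace [Fintype n] [DecidableEq n] (hM : M.PosSemidef) (i j : n) :
    ‖M i j‖ ≤ M.trace.re := by
  have hi := hM.re_apply_le_re_trace i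
  have hj := hM.re_apply_le_re_trace j
  have h0i : 0 ≤ (M i i).re := (Complex.nonneg_iff.1 hM.diag_nonneg).1
  have h0j : 0 ≤ (M j j).re := (Complex.nonneg_iff.1 hM.diag_nonneg).1
  refine (pow_le_pow_iff_left₀ (norm_nonneg _) (h0i.trans hi) two_ne_zero).1 ?_
  calc ‖M i j‖ ^ 2 ≤ (M i i).re * (M j j).re := hM.norm_apply_sq_le i j
    _ ≤ M.trace.re ^ 2 := by rw [sq]; exact mul_le_mul hi hj h0j (h0i.trans hi)

end Matrix.PosSemidef

section CompletePositivity

variable {A B C : Type*}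

noncomputable def ampMap (m : Type*) (f : Matrix A A ℂ → Matrix B B ℂ)
    (M : Matrix (m × A) (m × A) ℂ) : Matrix (m × B) (m × B) ℂ :=
  Matrix.of fun p p' => f (Matrix.of fun x x' => M (p.1, x) (p'.1, x')) p.2 p'.2

def IsCPMap (f : Matrix A A ℂ → Matrix B B ℂ) : Prop :=
  ∀ (m : Type) (_ : Fintype m), ∀ M : Matrix (m × A) (m × A) ℂ,
    M.PosSemidef → (ampMap m f M).PosSemidef

theorem isCompletelyPositive_iff_isCPMap [Fintype A] {Ψ : Matrix A A ℂ →ₗ[ℂ] Matrix A A ℂ} :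
    IsCompletelyPositive Ψ ↔ IsCPMap Ψ :=
  Iff.rfl

theorem IsCPMap.comp {g : Matrix B B ℂ → Matrix C C ℂ} {f : Matrix A A ℂ → Matrix B B ℂ}
    (hg : IsCPMap g) (hf : IsCPMap f) : IsCPMap (g ∘ f) :=
  fun m hm M hM => hg m hm _ (hf m hm M hM)

theorem ampMap_kraus [Fintype A] {ι : Type*} [Fintype ι] (m : Type*) [Fintype m] [DecidableEq m]
    (V : ι → Matrix B A ℂ) (M : Matrix (m × A) (m × A) ℂ) :
    ampMap m (fun X => ∑ i, V i * X * (V i)ᴴ) M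
      = ∑ i, ((1 : Matrix m m ℂ) ⊗ₖ V i) * M * ((1 : Matrix m m ℂ) ⊗ₖ V i)ᴴ := by
  ext ⟨x, β⟩ ⟨x', β'⟩
  simp [ampMap, Matrix.sum_apply, Matrix.mul_apply, Matrix.one_apply, Fintype.sum_prod_type,
    Finset.sum_mul, apply_ite (starRingEnd ℂ)]

theorem isCPMap_of_eq_kraus [Fintype A] [Fintype B] {ι : Type*} [Fintype ι]
    {f : Matrix A A ℂ → Matrix B B ℂ} (V : ι → Matrix B A ℂ)
    (hf : ∀ X, f X = ∑ i, V i * X * (V i)ᴴ) : IsCPMap f := by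
  classical
  intro m _ M hM
  rw [show f = _ from funext hf, ampMap_kraus]
  exact Finset.sum_induction _ Matrix.PosSemidef (fun _ _ => .add) .zero
    fun i _ => hM.mul_mul_conjTranspose_same _

variable (A) in
def ancillaIsometry [DecidableEq A] [DecidableEq B] (b0 : B) : Matrix (A × B) A ℂ :=
  Matrix.of fun p x => if p = (x, b0) then 1 else 0

theorem ancilla_eq_mul [Fintype A] [Fintype B] [DecidableEq A] [DecidableEq B] (b0 : B)
    (ρ : Matrix A A ℂ) :
    ancilla A B b0 ρ = ancillaIsometry A b0 * ρ * (ancillaIsometry A b0)ᴴ := by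
  ext ⟨x, β⟩ ⟨x', β'⟩
  by_cases h : β = b0 <;> by_cases h' : β' = b0 <;>
    simp [ancilla, ancillaIsometry, Matrix.mul_apply, h, h', apply_ite (starRingEnd ℂ)]

theorem ptraceB_eq_sum [Fintype A] [Fintype B] [DecidableEq A] [DecidableEq B]
    (X : Matrix (A × B) (A × B) ℂ) :
    ptraceB A B X = ∑ b0 : B, (ancillaIsometry A b0)ᴴ * X * ancillaIsometry A b0 := by
  ext x x'
  simp [ptraceB, ancillaIsometry, Matrix.sum_apply, Matrix.mul_apply, apply_ite (starRingEnd ℂ)]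

theorem isCPMap_ancilla [Fintype A] [Fintype B] [DecidableEq B] (b0 : B) :
    IsCPMap (ancilla A B b0) := by
  classical
  exact isCPMap_of_eq_kraus (fun _ : Unit => ancillaIsometry A b0) fun ρ => by
    simp [ancilla_eq_mul]

theorem isCPMap_ptraceB [Fintype A] [Fintype B] : IsCPMap (ptraceB A B) := by
  classical
  exact isCPMap_of_eq_kraus (fun b0 => (ancillaIsometry A b0)ᴴ) fun X => by
    simp [ptraceB_eq_sum]

theorem isCPMap_sandwich [Fintype A] (Q : Matrix A A ℂ) : IsCPMap (sandwich Q Qᴴ) :=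
  isCPMap_of_eq_kraus (fun _ : Unit => Q) fun X => by simp [sandwich]

theorem IsCompletelyPositive.isCPMap_amp {n : Type} [Fintype n]
    {Ψ : Matrix n n ℂ →ₗ[ℂ] Matrix n n ℂ} (hΨ : IsCompletelyPositive Ψ) (A : Type) [Fintype A] :
    IsCPMap (amp A Ψ) := by
  intro m _ M hM
  exact (hΨ (m × A) inferInstance _ (hM.submatrix (Equiv.prodAssoc m A n))).submatrix
    (Equiv.prodAssoc m A n).symm

end CompletePositivity

theorem transferOp_isCompletelyPositive {n : Type} [Fintype n] [DecidableEq n] (b0 : n)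
    (U : Matrix (n × n) (n × n) ℂ) {Ψ : Matrix n n ℂ →ₗ[ℂ] Matrix n n ℂ}
    (hΨ : IsCompletelyPositive Ψ) : IsCompletelyPositive (transferOp b0 U Ψ) := by
  have hU' : IsCPMap (sandwich Uᴴ U) := by simpa using isCPMap_sandwich Uᴴ
  exact isCompletelyPositive_iff_isCPMap.2 <| isCPMap_ptraceB.comp <| hU'.comp <|
    (hΨ.isCPMap_amp n).comp <| (isCPMap_sandwich U).comp (isCPMap_ancilla b0)

section TracePreservation

variable {A B : Type*} [Fintype A] [Fintype B]

theorem trace_ptraceB (X : Matrix (A × B) (A × B) ℂ) : (ptraceB A B X).trace = X.trace := by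
  simp [ptraceB, Matrix.trace, Fintype.sum_prod_type]

theorem trace_ancilla [DecidableEq B] (b0 : B) (ρ : Matrix A A ℂ) :
    (ancilla A B b0 ρ).trace = ρ.trace := by
  simp [ancilla, Matrix.trace, Fintype.sum_prod_type]

theorem IsTracePreserving.trace_amp {Ψ : Matrix B B ℂ →ₗ[ℂ] Matrix B B ℂ}
    (hΨ : IsTracePreserving Ψ) (X : Matrix (A × B) (A × B) ℂ) :
    (amp A Ψ X).trace = X.trace := by
  simp only [Matrix.trace, Fintype.sum_prod_type]
  exact Finset.sum_congr rfl fun x _ => hΨ (Matrix.of fun y y' => X (x, y) (x, y'))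

theorem trace_sandwich [DecidableEq A] {P Q : Matrix A A ℂ} (h : Q * P = 1) (X : Matrix A A ℂ) :
    (sandwich P Q X).trace = X.trace := by
  rw [sandwich, LinearMap.coe_mk, AddHom.coe_mk, Matrix.trace_mul_cycle, h, one_mul]

end TracePreservation

theorem transferOp_isTracePreserving {n : Type} [Fintype n] [DecidableEq n] (b0 : n)
    {U : Matrix (n × n) (n × n) ℂ} (hU : U ∈ Matrix.unitaryGroup (n × n) ℂ)
    {Ψ : Matrix n n ℂ →ₗ[ℂ] Matrix n n ℂ} (hΨ : IsTracePreserving Ψ) :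
    IsTracePreserving (transferOp b0 U Ψ) := by
  have hUU : Uᴴ * U = 1 := Matrix.mem_unitaryGroup_iff'.1 hU
  have hUU' : U * Uᴴ = 1 := Matrix.mem_unitaryGroup_iff.1 hU
  intro ρ
  simp only [transferOp, LinearMap.comp_apply, trace_ptraceB, trace_sandwich hUU,
    trace_sandwich hUU', hΨ.trace_amp, trace_ancilla]

theorem IsCPTP.transferOp {n : Type} [Fintype n] [DecidableEq n] (b0 : n)
    {U : Matrix (n × n) (n × n) ℂ} (hU : U ∈ Matrix.unitaryGroup (n × n) ℂ)
    {Ψ : Matrix n n ℂ →ₗ[ℂ] Matrix n n ℂ} (hΨ : IsCPTP Ψ) : IsCPTP (transferOp b0 U Ψ) :=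
  ⟨transferOp_isTracePreserving b0 hU hΨ.1, transferOp_isCompletelyPositive b0 U hΨ.2⟩

theorem amp_add {A B : Type*} [Fintype A] [Fintype B] (Φ Ψ : Matrix B B ℂ →ₗ[ℂ] Matrix B B ℂ) :
    amp A (Φ + Ψ) = amp A Φ + amp A Ψ := by
  ext; simp [amp]

theorem amp_smul {A B : Type*} [Fintype A] [Fintype B] (z : ℂ)
    (Φ : Matrix B B ℂ →ₗ[ℂ] Matrix B B ℂ) : amp A (z • Φ) = z • amp A Φ := by
  ext; simp [amp]

noncomputable def transferOpₗ {A B : Type*} [Fintype A] [Fintype B] [DecidableEq B] (b0 : B)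
    (U : Matrix (A × B) (A × B) ℂ) :
    (Matrix B B ℂ →ₗ[ℂ] Matrix B B ℂ) →ₗ[ℂ] Matrix A A ℂ →ₗ[ℂ] Matrix A A ℂ where
  toFun := transferOp b0 U
  map_add' Φ Ψ := by simp only [transferOp, amp_add, LinearMap.add_comp, LinearMap.comp_add]
  map_smul' z Φ := by
    simp only [transferOp, amp_smul, LinearMap.smul_comp, LinearMap.comp_smul, RingHom.id_apply]

section Choi

variable {n : Type} [Fintype n] [DecidableEq n]

variable (n) in
def maxEntangledVec : n × n → ℂ := fun p => if p.1 = p.2 then 1 else 0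

noncomputable def choiMatrix (Ψ : Matrix n n ℂ →ₗ[ℂ] Matrix n n ℂ) : Matrix (n × n) (n × n) ℂ :=
  amp n Ψ (Matrix.vecMulVec (maxEntangledVec n) (star (maxEntangledVec n)))

theorem choiMatrix_apply (Ψ : Matrix n n ℂ →ₗ[ℂ] Matrix n n ℂ) (a a' i j : n) :
    choiMatrix Ψ (a, i) (a', j) = Ψ (Matrix.single a a' 1) i j := by
  have hblock : (Matrix.of fun y y' => Matrix.vecMulVec (maxEntangledVec n)
      (star (maxEntangledVec n)) (a, y) (a', y')) = Matrix.single a a' 1 := by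
    ext y y'
    by_cases ha : a = y <;> by_cases ha' : a' = y' <;>
      simp [maxEntangledVec, Matrix.vecMulVec_apply, ha, ha']
  simp [choiMatrix, amp, hblock]

theorem IsCompletelyPositive.posSemidef_choiMatrix {Ψ : Matrix n n ℂ →ₗ[ℂ] Matrix n n ℂ}
    (hΨ : IsCompletelyPositive Ψ) : (choiMatrix Ψ).PosSemidef :=
  hΨ n inferInstance _ (Matrix.posSemidef_vecMulVec_self_star _)

theorem IsTracePreserving.trace_choiMatrix {Ψ : Matrix n n ℂ →ₗ[ℂ] Matrix n n ℂ}
    (hΨ : IsTracePreserving Ψ) : (choiMatrix Ψ).trace = Fintype.card n := by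
  rw [choiMatrix, hΨ.trace_amp]
  simp [Matrix.trace, maxEntangledVec, Matrix.vecMulVec_apply, Fintype.sum_prod_type]

theorem IsCPTP.norm_apply_single_le {Ψ : Matrix n n ℂ →ₗ[ℂ] Matrix n n ℂ} (hΨ : IsCPTP Ψ)
    (a a' i j : n) : ‖Ψ (Matrix.single a a' 1) i j‖ ≤ Fintype.card n := by
  simpa [choiMatrix_apply, hΨ.1.trace_choiMatrix] using
    hΨ.2.posSemidef_choiMatrix.norm_apply_le_re_trace (a, i) (a', j)

end Choi

theorem transferOp_eigenvalue_modulus_le_one_general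
    {n : Type} [Fintype n] [DecidableEq n] (b0 : n)
    (U : Matrix.unitaryGroup (n × n) ℂ)
    (Φ : Matrix n n ℂ →ₗ[ℂ] Matrix n n ℂ)
    (hmem : Φ ∈ Submodule.span ℂ
      {Ψ : Matrix n n ℂ →ₗ[ℂ] Matrix n n ℂ | IsCPTP Ψ})
    (hne : Φ ≠ 0) (lam : ℂ)
    (heig : transferOp b0 (U : Matrix (n × n) (n × n) ℂ) Φ = lam • Φ) :
    ‖lam‖ ≤ 1 := by
  obtain ⟨a, a', i, j, hΦ⟩ : ∃ a a' i j, Φ (Matrix.single a a' 1) i j ≠ 0 := by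
    by_contra! h
    exact hne (Matrix.ext_linearMap ℂ fun a a' => LinearMap.ext_ring (Matrix.ext (h a a')))
  exact norm_le_one_of_apply_eq_smul_of_mem_span (T := transferOpₗ b0 U)
    (fun Ψ hΨ => hΨ.transferOp b0 U.2)
    (Matrix.entryLinearMap ℂ ℂ i j ∘ₗ LinearMap.applyₗ (Matrix.single a a' 1))
    ⟨_, fun Ψ hΨ => hΨ.norm_apply_single_le a a' i j⟩ hmem hΦ heig

/-- **Theorem 1 (concrete form).** Let `U` be a unitary on `ℂ^(n × n)` (with `A = B = n`).
If a nonzero element `Φ` of the linear span of the CPTP maps on `Matrix n n ℂ` satisfies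
`T_U[Φ] = λ • Φ`, then `|λ| ≤ 1`. -/
theorem transferOp_eigenvalue_modulus_le_one
    {n : Type} [Fintype n] [DecidableEq n] [Nonempty n] (b0 : n)
    (U : Matrix.unitaryGroup (n × n) ℂ)
    (Φ : Matrix n n ℂ →ₗ[ℂ] Matrix n n ℂ)
    (hmem : Φ ∈ Submodule.span ℂ
      {Ψ : Matrix n n ℂ →ₗ[ℂ] Matrix n n ℂ | IsCPTP Ψ})
    (hne : Φ ≠ 0) (lam : ℂ)
    (heig : transferOp b0 (U : Matrix (n × n) (n × n) ℂ) Φ = lam • Φ) :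
    ‖lam‖ ≤ 1 :=
  transferOp_eigenvalue_modulus_le_one_general b0 U Φ hmem hne lam heig
end

section
/- Let V be a finite-dimensional normed vector space over ℂ, let S ⊆ V be a bounded and closed subset whose ℂ-linear span is all of V, and let T : V →ₗ[ℂ] V be a linear map with T '' S ⊆ S. Suppose x₀ ∈ S satisfies T x₀ = x₀, that the generalized eigenspace of T for the eigenvalue 1 is exactly the one-dimensional span of x₀, that every eigenvalue μ ≠ 1 of T satisfies |μ| ≤ Δ for some fixed Δ with 0 ≤ Δ < 1, and that the only element of S lying in the ℂ-span of x₀ is x₀ itself. Then for every x ∈ S and every Δ' with Δ < Δ' < 1 there exists a constant C > 0 such that ‖T^k x − x₀‖ ≤ C · Δ'^k for all natural numbers k. -/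
/-!
Decompose `x` along the generalized eigenspaces of `T`. On the generalized `μ`-eigenspace,
`T ^ k = ∑ j < d, (k choose j) μ ^ (k - j) (T - μ) ^ j` is a fixed number of terms of size
`k ^ j ‖μ‖ ^ k`, hence `O(Δ' ^ k)` when `μ ≠ 1`; the component `a` in the generalized
`1`-eigenspace `span {x₀}` is fixed by `T`. So `T ^ k x - a = O(Δ' ^ k)`, the limit `a` of
`T ^ k x` lies in the closed set `S`, and `a = x₀`.
-/

open Filter Finset Asymptotics Module End

theorem pow_apply_eq_sum_of_pow_sub_smul_apply_eq_zero {R M : Type*} [CommRing R]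
    [AddCommGroup M] [Module R M] {f : End R M} {μ : R} {d k : ℕ} {w : M}
    (hw : ((f - μ • 1) ^ d) w = 0) (hdk : d ≤ k) :
    (f ^ k) w = ∑ j ∈ range d, ((k.choose j : R) * μ ^ (k - j)) • ((f - μ • 1) ^ j) w := by
  set N := f - μ • 1
  have hcomm : Commute N (μ • 1) := (Commute.one_right N).smul_right μ
  have hvanish : ∀ j, d ≤ j → (N ^ j) w = 0 := fun j hj => by
    rw [← Nat.sub_add_cancel hj, pow_add, mul_apply, hw, map_zero]
  calc (f ^ k) w = ((N + μ • 1) ^ k) w := by rw [sub_add_cancel]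
    _ = ∑ j ∈ range (k + 1), ((k.choose j : R) * μ ^ (k - j)) • (N ^ j) w := by
      rw [hcomm.add_pow, LinearMap.sum_apply]
      refine sum_congr rfl fun j _ => ?_
      rw [smul_pow, one_pow, mul_apply, mul_apply, End.natCast_apply, LinearMap.smul_apply,
        one_apply, ← Nat.cast_smul_eq_nsmul R, map_smul, map_smul, smul_smul, mul_comm]
    _ = _ := (sum_subset (range_subset_range.2 (by omega)) fun j _ hj => by
      rw [hvanish j (by simpa using hj), smul_zero]).symm

theorem isBigO_choose_mul_pow_sub {𝕜 : Type*} [NormedField 𝕜] {μ : 𝕜} {r : ℝ} (hμ : ‖μ‖ < r)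
    (j : ℕ) : (fun k : ℕ => (k.choose j : 𝕜) * μ ^ (k - j)) =O[atTop] fun k => r ^ k := by
  obtain ⟨ρ, hμρ, hρr⟩ := exists_between hμ
  have hρ : 0 < ρ := (norm_nonneg μ).trans_lt hμρ
  refine IsBigO.trans_isLittleO (g := fun k : ℕ => (k : ℝ) ^ j * ρ ^ k) ?_
    (isLittleO_pow_const_mul_const_pow_const_pow_of_norm_lt j (by rwa [Real.norm_of_nonneg hρ.le]))
    |>.isBigO
  refine .of_bound (ρ ^ j)⁻¹ ((eventually_ge_atTop j).mono fun k hjk => ?_)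
  have hchoose : ‖(k.choose j : 𝕜)‖ ≤ (k : ℝ) ^ j := (Nat.norm_cast_le _).trans <| by
    rw [norm_one, mul_one]; exact_mod_cast Nat.choose_le_pow k j
  calc ‖(k.choose j : 𝕜) * μ ^ (k - j)‖ ≤ (k : ℝ) ^ j * ρ ^ (k - j) := by
        rw [norm_mul, norm_pow]; gcongr
    _ = (ρ ^ j)⁻¹ * ‖(k : ℝ) ^ j * ρ ^ k‖ := by
        rw [Real.norm_of_nonneg (by positivity), pow_sub₀ _ hρ.ne' hjk]; ring

theorem isBigO_pow_apply_of_mem_maxGenEigenspace {𝕜 V : Type*} [NormedField 𝕜]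
    [SeminormedAddCommGroup V] [NormedSpace 𝕜 V] {f : End 𝕜 V} {μ : 𝕜} {r : ℝ} (hμ : ‖μ‖ < r)
    {w : V} (hw : w ∈ f.maxGenEigenspace μ) :
    (fun k => (f ^ k) w) =O[atTop] fun k => r ^ k := by
  obtain ⟨d, hd⟩ := (mem_maxGenEigenspace f μ w).1 hw
  have hterm (j : ℕ) : (fun k : ℕ => ((k.choose j : 𝕜) * μ ^ (k - j)) • ((f - μ • 1) ^ j) w)
      =O[atTop] fun k => r ^ k := by
    simpa using (isBigO_choose_mul_pow_sub hμ j).smul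
      (isBigO_const_const (((f - μ • 1) ^ j) w) (one_ne_zero : (1 : ℝ) ≠ 0) atTop)
  exact (IsBigO.fun_sum fun j _ => hterm j).congr' ((eventually_ge_atTop d).mono fun k hdk =>
    (pow_apply_eq_sum_of_pow_sub_smul_apply_eq_zero hd hdk).symm) EventuallyEq.rfl

theorem hasEigenvalue_of_mem_maxGenEigenspace {R M : Type*} [CommRing R] [AddCommGroup M]
    [Module R M] {f : End R M} {μ : R} {w : M} (hw : w ∈ f.maxGenEigenspace μ) (hw0 : w ≠ 0) :
    f.HasEigenvalue μ :=
  HasUnifEigenvalue.lt zero_lt_one (k := ⊤) fun h => hw0 (by rwa [maxGenEigenspace, h] at hw)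

theorem exists_isBigO_pow_apply_sub {𝕜 V : Type*} [NormedField 𝕜] [IsAlgClosed 𝕜]
    [SeminormedAddCommGroup V] [NormedSpace 𝕜 V] [FiniteDimensional 𝕜 V] {T : End 𝕜 V} (h1 : T.maxGenEigenspace 1 ≤ T.eigenspace 1) {r : ℝ}
    (hr : ∀ μ, μ ≠ 1 → T.HasEigenvalue μ → ‖μ‖ < r) (x : V) :
    ∃ a ∈ T.maxGenEigenspace 1, (fun k => (T ^ k) x - a) =O[atTop] fun k => r ^ k := by
  have hx : x ∈ ⨆ μ, T.maxGenEigenspace μ := by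
    rw [iSup_maxGenEigenspace_eq_top]; trivial
  refine Submodule.iSup_induction _ (motive := fun y =>
    ∃ a ∈ T.maxGenEigenspace 1, (fun k => (T ^ k) y - a) =O[atTop] fun k => r ^ k) hx
    (fun μ y hy => ?_) ?_ fun y z hy hz => ?_
  · by_cases hμ : μ = 1
    · subst hμ
      refine ⟨y, hy, (isBigO_zero _ _).congr_left fun k => ?_⟩
      have hTy : T y = y := by simpa using mem_eigenspace_iff.1 (h1 hy)
      rw [End.coe_pow, Function.iterate_fixed hTy, sub_self]
    · by_cases hy0 : y = 0
      · exact ⟨0, zero_mem _, (isBigO_zero _ _).congr_left fun k => by simp [hy0]⟩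
      refine ⟨0, zero_mem _, ?_⟩
      simpa using isBigO_pow_apply_of_mem_maxGenEigenspace
        (hr μ hμ (hasEigenvalue_of_mem_maxGenEigenspace hy hy0)) hy
  · exact ⟨0, zero_mem _, (isBigO_zero _ _).congr_left fun k => by simp⟩
  · obtain ⟨a, ha, hya⟩ := hy
    obtain ⟨b, hb, hzb⟩ := hz
    exact ⟨a + b, add_mem ha hb, (hya.add hzb).congr_left fun k => by
      rw [map_add]; abel⟩

theorem exists_pos_forall_norm_le_mul_pow_of_isBigO {E : Type*} [SeminormedAddCommGroup E]
    {f : ℕ → E} {r : ℝ} (hr : 0 < r) (h : f =O[atTop] fun k => r ^ k) :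
    ∃ C, 0 < C ∧ ∀ k, ‖f k‖ ≤ C * r ^ k := by
  obtain ⟨C, hC, hbound⟩ := bound_of_isBigO_nat_atTop h
  refine ⟨C, hC, fun k => ?_⟩
  simpa [abs_of_pos hr] using hbound (pow_ne_zero k hr.ne')

theorem iterate_tendsto_fixedPoint_exponentially_general
    {V : Type*} [NormedAddCommGroup V] [NormedSpace ℂ V] [FiniteDimensional ℂ V]
    (S : Set V) (hSclosed : IsClosed S)
    (T : V →ₗ[ℂ] V) (hTS : T '' S ⊆ S)
    (x₀ : V) (hfix : T x₀ = x₀)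
    (hgen : Module.End.maxGenEigenspace T 1 = Submodule.span ℂ {x₀})
    (Δ : ℝ) (hΔ0 : 0 ≤ Δ)
    (heig : ∀ μ : ℂ, μ ≠ 1 → Module.End.HasEigenvalue T μ → ‖μ‖ ≤ Δ)
    (huniq : ∀ y ∈ S, y ∈ Submodule.span ℂ ({x₀} : Set V) → y = x₀) :
    ∀ x ∈ S, ∀ Δ' : ℝ, Δ < Δ' → Δ' < 1 →
      ∃ C : ℝ, 0 < C ∧ ∀ k : ℕ, ‖(T ^ k) x - x₀‖ ≤ C * Δ' ^ k := by
  intro x hxS Δ' hΔΔ' hΔ'1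
  have hΔ' : 0 < Δ' := hΔ0.trans_lt hΔΔ'
  have h1 : maxGenEigenspace T 1 ≤ eigenspace T 1 := by
    rw [hgen, Submodule.span_singleton_le_iff_mem, mem_eigenspace_iff, one_smul]
    exact hfix
  obtain ⟨a, ha, hdecay⟩ :=
    exists_isBigO_pow_apply_sub h1 (fun μ hμ hev => (heig μ hμ hev).trans_lt hΔΔ') x
  have hlim : Tendsto (fun k => (T ^ k) x) atTop (nhds a) := tendsto_sub_nhds_zero_iff.1 <|
    hdecay.trans_tendsto (tendsto_pow_atTop_nhds_zero_of_lt_one hΔ'.le hΔ'1)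
  have hiterS : ∀ k, (T ^ k) x ∈ S := fun k => by
    rw [End.coe_pow]; exact (Set.mapsTo_iff_image_subset.2 hTS).iterate k hxS
  have hax₀ : a = x₀ := huniq a (hSclosed.mem_of_tendsto hlim (.of_forall hiterS)) (hgen ▸ ha)
  exact exists_pos_forall_norm_le_mul_pow_of_isBigO hΔ' (hax₀ ▸ hdecay)

/-- **Corollary 2 (abstract form).** Let `T` be a linear endomorphism of a finite-dimensional
complex normed vector space mapping a bounded closed spanning set `S` into itself. If
`x₀ ∈ S` is a fixed point of `T` whose generalized eigenspace (for the eigenvalue `1`) is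
exactly the one-dimensional span of `x₀`, every other eigenvalue has modulus at most
`Δ < 1`, and `x₀` is the only element of `S` in its own span, then iterating `T` on any
element of `S` converges to `x₀` exponentially fast, at any rate `Δ'` with `Δ < Δ' < 1`. -/
theorem iterate_tendsto_fixedPoint_exponentially
    {V : Type*} [NormedAddCommGroup V] [NormedSpace ℂ V] [FiniteDimensional ℂ V]
    (S : Set V) (hSbdd : Bornology.IsBounded S) (hSclosed : IsClosed S)
    (hSspan : Submodule.span ℂ S = ⊤)
    (T : V →ₗ[ℂ] V) (hTS : T '' S ⊆ S)
    (x₀ : V) (hx₀S : x₀ ∈ S) (hx₀ne : x₀ ≠ 0) (hfix : T x₀ = x₀)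
    (hgen : Module.End.maxGenEigenspace T 1 = Submodule.span ℂ {x₀})
    (Δ : ℝ) (hΔ0 : 0 ≤ Δ) (hΔ1 : Δ < 1)
    (heig : ∀ μ : ℂ, μ ≠ 1 → Module.End.HasEigenvalue T μ → ‖μ‖ ≤ Δ)
    (huniq : ∀ y ∈ S, y ∈ Submodule.span ℂ ({x₀} : Set V) → y = x₀) :
    ∀ x ∈ S, ∀ Δ' : ℝ, Δ < Δ' → Δ' < 1 →
      ∃ C : ℝ, 0 < C ∧ ∀ k : ℕ, ‖(T ^ k) x - x₀‖ ≤ C * Δ' ^ k :=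
  iterate_tendsto_fixedPoint_exponentially_general S hSclosed T hTS x₀ hfix hgen Δ hΔ0 heig huniq
end

section
/- Let n be a nonempty finite type. There exists a constant C > 0 such that every linear map Φ : Matrix n n ℂ →ₗ[ℂ] Matrix n n ℂ that is trace-preserving and completely positive satisfies ‖Φ X‖_F ≤ C · ‖X‖_F for all X : Matrix n n ℂ. In other words, the set of CPTP maps on Matrix n n ℂ is bounded in the operator norm induced by the Frobenius norm. -/
open scoped Matrix ComplexOrder

attribute [local instance] Matrix.frobeniusSeminormedAddCommGroup

/-! A positive trace-preserving map sends `v vᴴ` to a positive semidefinite matrix of trace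
`‖v‖²`, and the Frobenius norm of a positive semidefinite matrix is at most its trace. Polarization
writes the matrix unit `eᵢ eⱼᴴ` as a combination of four matrices `w wᴴ` with `‖w‖ ≤ 2` and weights
of modulus `1/4`, so `‖Φ (eᵢ eⱼᴴ)‖ ≤ 4`; expanding `X` in matrix units gives
`‖Φ X‖ ≤ 4 (card n)² ‖X‖`. -/

attribute [local instance] Matrix.frobeniusNormSMulClass

open Matrix WithLp

namespace Matrix

variable {m n 𝕜 : Type*} [Fintype m] [Fintype n] [RCLike 𝕜]

theorem norm_entry_le_frobenius_norm {α : Type*} [SeminormedAddCommGroup α] (A : Matrix m n α)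
    (i : m) (j : n) : ‖A i j‖ ≤ ‖A‖ :=
  calc ‖A i j‖ ≤ ‖toLp 2 (A i)‖ := PiLp.norm_apply_le (toLp 2 (A i)) j
    _ ≤ ‖A‖ := PiLp.norm_apply_le (toLp 2 fun i ↦ toLp 2 (A i)) i

theorem frobenius_norm_vecMulVec_star_le (u : m → 𝕜) (v : n → 𝕜) :
    ‖vecMulVec u (star v)‖ ≤ ‖toLp 2 u‖ * ‖toLp 2 v‖ := by
  have h := frobenius_norm_mul (replicateCol Unit u) (replicateRow Unit (star v))
  simpa [vecMulVec_eq Unit, EuclideanSpace.norm_eq] using h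

theorem re_trace_vecMulVec_star (v : n → 𝕜) :
    RCLike.re (vecMulVec v (star v)).trace = ‖toLp 2 v‖ ^ 2 := by
  rw [trace_vecMulVec, ← EuclideanSpace.inner_toLp_toLp, inner_self_eq_norm_sq]

theorem PosSemidef.frobenius_norm_le_re_trace {M : Matrix n n 𝕜} (hM : M.PosSemidef) :
    ‖M‖ ≤ RCLike.re M.trace := by
  obtain ⟨k, v, rfl⟩ := posSemidef_iff_eq_sum_vecMulVec.mp hM
  calc ‖∑ i, vecMulVec (v i) (star (v i))‖
      ≤ ∑ i, ‖toLp 2 (v i)‖ * ‖toLp 2 (v i)‖ :=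
        (norm_sum_le _ _).trans (Finset.sum_le_sum fun i _ ↦ frobenius_norm_vecMulVec_star_le _ _)
    _ = RCLike.re (∑ i, vecMulVec (v i) (star (v i))).trace := by
        simp only [trace_sum, map_sum, re_trace_vecMulVec_star, sq]

open Complex in
theorem vecMulVec_star_eq_polarization (u v : n → ℂ) :
    vecMulVec u (star v) = (1 / 4 : ℂ) • ∑ k : Fin 4, ![1, I, -1, -I] k •
      vecMulVec (u + ![1, I, -1, -I] k • v) (star (u + ![1, I, -1, -I] k • v)) := by
  ext a b
  simp only [Fin.sum_univ_four, cons_val_zero, cons_val_one, cons_val, star_add, star_smul,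
    RCLike.star_def, map_one, map_neg, conj_I, neg_neg, one_smul, neg_smul, smul_apply, add_apply,
    neg_apply, vecMulVec_apply, Pi.add_apply, Pi.smul_apply, Pi.neg_apply, Pi.star_apply, smul_eq_mul]
  linear_combination (u a * starRingEnd ℂ (v b) - v a * starRingEnd ℂ (u b)) / 2 * I_sq

end Matrix

def IsPositiveMap {n : Type*} [Fintype n] (Φ : Matrix n n ℂ →ₗ[ℂ] Matrix n n ℂ) : Prop :=
  ∀ M : Matrix n n ℂ, M.PosSemidef → (Φ M).PosSemidef

theorem IsCompletelyPositive.isPositiveMap {n : Type*} [Fintype n]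
    {Φ : Matrix n n ℂ →ₗ[ℂ] Matrix n n ℂ} (hCP : IsCompletelyPositive Φ) : IsPositiveMap Φ :=
  fun _ hM ↦ (hCP Unit inferInstance _ (hM.submatrix Prod.snd)).submatrix fun i ↦ ((), i)

namespace IsPositiveMap

variable {n : Type*} [Fintype n] {Φ : Matrix n n ℂ →ₗ[ℂ] Matrix n n ℂ}

theorem norm_apply_le_re_trace (hΦ : IsPositiveMap Φ) (hTP : IsTracePreserving Φ)
    {M : Matrix n n ℂ} (hM : M.PosSemidef) : ‖Φ M‖ ≤ M.trace.re :=
  hTP M ▸ (hΦ M hM).frobenius_norm_le_re_trace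

theorem norm_apply_vecMulVec_star_le (hΦ : IsPositiveMap Φ) (hTP : IsTracePreserving Φ)
    (u v : n → ℂ) : ‖Φ (vecMulVec u (star v))‖ ≤ (‖toLp 2 u‖ + ‖toLp 2 v‖) ^ 2 := by
  have hterm (c : ℂ) (hc : ‖c‖ = 1) :
      ‖Φ (vecMulVec (u + c • v) (star (u + c • v)))‖ ≤ (‖toLp 2 u‖ + ‖toLp 2 v‖) ^ 2 := by
    refine (hΦ.norm_apply_le_re_trace hTP (posSemidef_vecMulVec_self_star _)).trans ?_
    rw [← RCLike.re_to_complex, re_trace_vecMulVec_star]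
    gcongr
    simpa [norm_smul, hc] using norm_add_le (toLp 2 u) (c • toLp 2 v)
  rw [vecMulVec_star_eq_polarization, map_smul, map_sum, norm_smul]
  calc _ ≤ ‖(1 / 4 : ℂ)‖ * ∑ k : Fin 4, (‖toLp 2 u‖ + ‖toLp 2 v‖) ^ 2 := by
        gcongr
        refine (norm_sum_le _ _).trans (Finset.sum_le_sum fun k _ ↦ ?_)
        have hk : ‖![1, Complex.I, -1, -Complex.I] k‖ = 1 := by fin_cases k <;> simp
        rw [map_smul, norm_smul, hk, one_mul]
        exact hterm _ hk
    _ = _ := by simp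

theorem norm_apply_single_one_le [DecidableEq n] (hΦ : IsPositiveMap Φ)
    (hTP : IsTracePreserving Φ) (i j : n) : ‖Φ (single i j 1)‖ ≤ 4 := by
  have h := hΦ.norm_apply_vecMulVec_star_le hTP (Pi.single i 1) (Pi.single j 1)
  rw [← Pi.single_star, star_one, ← single_eq_single_vecMulVec_single] at h
  norm_num at h
  exact h

theorem norm_apply_le (hΦ : IsPositiveMap Φ) (hTP : IsTracePreserving Φ) (X : Matrix n n ℂ) :
    ‖Φ X‖ ≤ 4 * Fintype.card n ^ 2 * ‖X‖ := by
  classical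
  calc ‖Φ X‖ = ‖∑ i, ∑ j, X i j • Φ (single i j 1)‖ := by
        conv_lhs => rw [matrix_eq_sum_single X]
        simp only [map_sum, ← map_smul, smul_single, smul_eq_mul, mul_one]
    _ ≤ ∑ i : n, ∑ j : n, ‖X‖ * 4 := by
        refine (norm_sum_le _ _).trans (Finset.sum_le_sum fun i _ ↦ ?_)
        refine (norm_sum_le _ _).trans (Finset.sum_le_sum fun j _ ↦ ?_)
        rw [norm_smul]
        exact mul_le_mul (norm_entry_le_frobenius_norm X i j)
          (hΦ.norm_apply_single_one_le hTP i j) (norm_nonneg _) (norm_nonneg _)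
    _ = 4 * Fintype.card n ^ 2 * ‖X‖ := by
        simp only [Finset.sum_const, Finset.card_univ, nsmul_eq_mul]
        ring

end IsPositiveMap

theorem cptp_uniformly_bounded_general
    {n : Type} [Fintype n] :
    ∃ C : ℝ, 0 < C ∧
      ∀ Φ : Matrix n n ℂ →ₗ[ℂ] Matrix n n ℂ,
        IsTracePreserving Φ → IsCompletelyPositive Φ →
        ∀ X : Matrix n n ℂ, ‖Φ X‖ ≤ C * ‖X‖ := by
  refine ⟨4 * Fintype.card n ^ 2 + 1, by positivity, fun Φ hTP hCP X ↦ ?_⟩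
  calc ‖Φ X‖ ≤ 4 * Fintype.card n ^ 2 * ‖X‖ := hCP.isPositiveMap.norm_apply_le hTP X
    _ ≤ (4 * Fintype.card n ^ 2 + 1) * ‖X‖ := by gcongr; linarith

/-- **Boundedness of the set of quantum channels.** There is a constant `C > 0` such that
every CPTP map `Φ` on `Matrix n n ℂ` satisfies `‖Φ X‖_F ≤ C * ‖X‖_F` in Frobenius norm. -/
theorem cptp_uniformly_bounded
    {n : Type} [Fintype n] [Nonempty n] :
    ∃ C : ℝ, 0 < C ∧
      ∀ Φ : Matrix n n ℂ →ₗ[ℂ] Matrix n n ℂ,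
        IsTracePreserving Φ → IsCompletelyPositive Φ →
        ∀ X : Matrix n n ℂ, ‖Φ X‖ ≤ C * ‖X‖ :=
  cptp_uniformly_bounded_general
end

section
/- Let V be a normed vector space over ℂ, let S ⊆ V, let γ ∈ ℝ with 0 ≤ γ < 1, and let δ' ≥ 0. Let k be a natural number and let T_1, …, T_k and T̃_1, …, T̃_k be linear maps V →ₗ[ℂ] V such that for every i: (a) T_i '' S ⊆ S and T̃_i '' S ⊆ S; (b) for all x, y ∈ S, ‖T_i x − T_i y‖ ≤ γ · ‖x − y‖; and (c) for all x ∈ S, ‖T̃_i x − T_i x‖ ≤ δ'. Then for every Φ ∈ S, ‖(T̃_k ∘ ⋯ ∘ T̃_1) Φ − (T_k ∘ ⋯ ∘ T_1) Φ‖ ≤ δ' / (1 − γ). -/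
/-- `comps T a n` is the composition `T (a + n - 1) ∘ ⋯ ∘ T (a + 1) ∘ T a` of the `n`
consecutive maps `T a, …, T (a + n - 1)` (the map with the smallest index is applied
first); an empty composition (`n = 0`) is the identity map. -/
def comps {V : Type*} [AddCommGroup V] [Module ℂ V]
    (T : ℕ → (V →ₗ[ℂ] V)) (a : ℕ) : ℕ → (V →ₗ[ℂ] V)
  | 0 => LinearMap.id
  | n + 1 => T (a + n) ∘ₗ comps T a n

/-- **Proposition 5 (Appendix B).** Let `T_1, …, T_k` and `T̃_1, …, T̃_1` be linear maps,
each mapping `S` into itself, with each `T_i` contractive on `S` with coefficient `γ < 1`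
and each `T̃_i` within `δ'` of `T_i` on `S`. Then for every `Φ ∈ S`,
`‖(T̃_k ∘ ⋯ ∘ T̃_1) Φ − (T_k ∘ ⋯ ∘ T_1) Φ‖ ≤ δ' / (1 − γ)`. -/
theorem noisy_composition_close
    {V : Type*} [NormedAddCommGroup V] [NormedSpace ℂ V]
    (S : Set V) (γ : ℝ) (hγ0 : 0 ≤ γ) (hγ1 : γ < 1) (δ' : ℝ) (hδ' : 0 ≤ δ')
    (k : ℕ) (T Tt : ℕ → (V →ₗ[ℂ] V))
    (hTS : ∀ i, 1 ≤ i → i ≤ k → T i '' S ⊆ S)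
    (hTtS : ∀ i, 1 ≤ i → i ≤ k → Tt i '' S ⊆ S)
    (hcontr : ∀ i, 1 ≤ i → i ≤ k → ∀ x ∈ S, ∀ y ∈ S, ‖T i x - T i y‖ ≤ γ * ‖x - y‖)
    (hclose : ∀ i, 1 ≤ i → i ≤ k → ∀ x ∈ S, ‖Tt i x - T i x‖ ≤ δ')
    (Φ : V) (hΦ : Φ ∈ S) :
    ‖comps Tt 1 k Φ - comps T 1 k Φ‖ ≤ δ' / (1 - γ) := by
  have h1γ : (0:ℝ) < 1 - γ := by linarith
  have hC : 0 ≤ δ' / (1 - γ) := div_nonneg hδ' h1γ.le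
  have main : ∀ n, n ≤ k → comps T 1 n Φ ∈ S ∧ comps Tt 1 n Φ ∈ S ∧
      ‖comps Tt 1 n Φ - comps T 1 n Φ‖ ≤ δ' / (1 - γ) := by
    intro n
    induction n with
    | zero =>
      intro _
      refine ⟨hΦ, hΦ, ?_⟩
      simp [comps, hC]
    | succ n ih =>
      intro hnk
      obtain ⟨hxS, hyS, he⟩ := ih (Nat.le_of_succ_le hnk)
      have hi1 : 1 ≤ 1 + n := Nat.le_add_right 1 n
      have hik : 1 + n ≤ k := by omega
      have hxS' : T (1 + n) (comps T 1 n Φ) ∈ S :=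
        hTS _ hi1 hik ⟨_, hxS, rfl⟩
      have hyS' : Tt (1 + n) (comps Tt 1 n Φ) ∈ S :=
        hTtS _ hi1 hik ⟨_, hyS, rfl⟩
      refine ⟨hxS', hyS', ?_⟩
      have key : ‖Tt (1 + n) (comps Tt 1 n Φ) - T (1 + n) (comps T 1 n Φ)‖ ≤
          ‖Tt (1 + n) (comps Tt 1 n Φ) - T (1 + n) (comps Tt 1 n Φ)‖ +
          ‖T (1 + n) (comps Tt 1 n Φ) - T (1 + n) (comps T 1 n Φ)‖ := by
        have := norm_sub_le_norm_sub_add_norm_sub (Tt (1 + n) (comps Tt 1 n Φ))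
          (T (1 + n) (comps Tt 1 n Φ)) (T (1 + n) (comps T 1 n Φ))
        exact this
      have h1 : ‖Tt (1 + n) (comps Tt 1 n Φ) - T (1 + n) (comps Tt 1 n Φ)‖ ≤ δ' :=
        hclose _ hi1 hik _ hyS
      have h2 : ‖T (1 + n) (comps Tt 1 n Φ) - T (1 + n) (comps T 1 n Φ)‖ ≤
          γ * ‖comps Tt 1 n Φ - comps T 1 n Φ‖ :=
        hcontr _ hi1 hik _ hyS _ hxS
      have h3 : γ * ‖comps Tt 1 n Φ - comps T 1 n Φ‖ ≤ γ * (δ' / (1 - γ)) :=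
        mul_le_mul_of_nonneg_left he hγ0
      have hfinal : δ' + γ * (δ' / (1 - γ)) = δ' / (1 - γ) := by
        field_simp; ring
      show ‖(Tt (1 + n) ∘ₗ comps Tt 1 n) Φ - (T (1 + n) ∘ₗ comps T 1 n) Φ‖ ≤ _
      simp only [LinearMap.comp_apply]
      linarith
  exact (main k le_rfl).2.2
end

section
/- Let m and k be nonempty finite types, with a distinguished element 0 : k, and let V : Matrix (m × k) m ℂ be a matrix whose columns are orthonormal, i.e. Vᴴ * V = 1. Then there exists a unitary matrix U ∈ Matrix.unitaryGroup (m × k) ℂ such that V i j = U i (j, 0) for all i : m × k and j : m; that is, V coincides with the submatrix of U obtained by keeping only the columns indexed by pairs (j, 0). -/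
open scoped Matrix
open Function Matrix Module

/-! The columns of an isometry form an orthonormal family in `EuclideanSpace ℂ (m × k)`. Placing
them at the indices `(j, b0)` and extending to an orthonormal basis `b` (possible since the
dimension is the number of indices), the matrix with columns `b` is unitary and has the columns
of `V` in the required places. -/

section

variable {𝕜 : Type*} [RCLike 𝕜]

theorem Orthonormal.exists_orthonormalBasis_apply_eq_of_injective
    {E ι n : Type*} [NormedAddCommGroup E] [InnerProductSpace 𝕜 E] [FiniteDimensional 𝕜 E]
    [Fintype ι] (card_ι : finrank 𝕜 E = Fintype.card ι) {v : n → E} (hv : Orthonormal 𝕜 v)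
    {e : n → ι} (he : Injective e) :
    ∃ b : OrthonormalBasis ι 𝕜 E, ∀ j, b (e j) = v j := by
  set w : ι → E := extend e v 0
  have hw : (Set.range e).domRestrict w = v ∘ (Equiv.ofInjective e he).symm := by
    ext ⟨_, j, rfl⟩
    simp [Set.domRestrict_apply, w, he.extend_apply]
  obtain ⟨b, hb⟩ := Orthonormal.exists_orthonormalBasis_extension_of_card_eq card_ι
    (s := Set.range e) (v := w) (by rw [hw]; exact hv.comp _ (Equiv.injective _))
  exact ⟨b, fun j => (hb (e j) ⟨j, rfl⟩).trans (he.extend_apply v 0 j)⟩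

theorem Matrix.orthonormal_toLp_transpose_iff {ι n : Type*} [Fintype ι] [DecidableEq n]
    (V : Matrix ι n 𝕜) :
    Orthonormal 𝕜 (fun j => WithLp.toLp 2 (Vᵀ j) : n → EuclideanSpace 𝕜 ι) ↔ Vᴴ * V = 1 := by
  rw [← gram_eq_one_iff_orthonormal, gram_eq_conjTranspose_mul (EuclideanSpace.basisFun ι 𝕜)]
  rfl

theorem Matrix.exists_mem_unitaryGroup_submatrix_eq {ι n : Type*} [Fintype ι] [DecidableEq ι]
    [DecidableEq n] {V : Matrix ι n 𝕜} (hV : Vᴴ * V = 1) {e : n → ι} (he : Injective e) :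
    ∃ U ∈ unitaryGroup ι 𝕜, U.submatrix id e = V := by
  obtain ⟨b, hb⟩ := ((orthonormal_toLp_transpose_iff V).mpr hV)
    |>.exists_orthonormalBasis_apply_eq_of_injective finrank_euclideanSpace he
  refine ⟨(EuclideanSpace.basisFun ι 𝕜).toBasis.toMatrix b,
    (EuclideanSpace.basisFun ι 𝕜).toMatrix_orthonormalBasis_mem_unitary b, ?_⟩
  ext i j
  simp [Basis.toMatrix_apply, hb]

end

theorem isometry_eq_unitary_columns_general
    {m k : Type*} [Fintype m] [Fintype k] [DecidableEq m] [DecidableEq k]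
    (b0 : k)
    (V : Matrix (m × k) m ℂ) (hV : Vᴴ * V = 1) :
    ∃ U : Matrix (m × k) (m × k) ℂ, U ∈ Matrix.unitaryGroup (m × k) ℂ ∧
      ∀ (i : m × k) (j : m), V i j = U i (j, b0) := by
  obtain ⟨U, hU, hUV⟩ := exists_mem_unitaryGroup_submatrix_eq hV (Prod.mk_left_injective b0)
  exact ⟨U, hU, fun i j => (congrFun₂ hUV i j).symm⟩

/-- **Isometries extend to unitaries (Appendix C).** Every isometry
`V : Matrix (m × k) m ℂ` (i.e. `Vᴴ * V = 1`) arises as the submatrix of a unitary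
`U` on `ℂ^(m × k)` consisting of the columns indexed by pairs `(j, b0)`, where `b0 : k`
is the distinguished element; that is, `V = U (|b0⟩ ⊗ I)`. -/
theorem isometry_eq_unitary_columns
    {m k : Type*} [Fintype m] [Fintype k] [DecidableEq m] [DecidableEq k]
    [Nonempty m] [Nonempty k] (b0 : k)
    (V : Matrix (m × k) m ℂ) (hV : Vᴴ * V = 1) :
    ∃ U : Matrix (m × k) (m × k) ℂ, U ∈ Matrix.unitaryGroup (m × k) ℂ ∧
      ∀ (i : m × k) (j : m), V i j = U i (j, b0) :=
  isometry_eq_unitary_columns_general b0 V hV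
end
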